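/- arXiv:1907.05104 — 8 statements merged into one kernel-verified Lean document; each statement's English description precedes it below -/
import Mathlib

section
/- Let f : N → G be a finite-meet preserving map between frames and let u = f(0). Then the map e : G → ↓u defined by e(x) = x ∧ u is the cokernel of f in Frm∧, i.e., e ∘ f is the constant-top map, and any finite-meet preserving map g : G → X with g ∘ f constant-top factors uniquely through e. -/
/-- Let `f : N → G` be finite-meet preserving and `u = f ⊥`. Then
`e : G → ↓u`, `e x = x ⊓ u`, is the cokernel of `f` in `Frm∧`: `e ∘ f` is
constant-top, and any finite-meet preserving `g : G → X` with `g ∘ f`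
constant-top factors uniquely through `e` via a finite-meet preserving map. -/
theorem cokernel_in_Frm_inf
    {N G : Type*} [Order.Frame N] [Order.Frame G]
    (f : N → G) (hf_inf : ∀ a b, f (a ⊓ b) = f a ⊓ f b) (hf_top : f ⊤ = ⊤) :
    (∀ n : N, (⟨f n ⊓ f ⊥, inf_le_right⟩ : Set.Iic (f ⊥)) = ⊤) ∧
      (∀ (X : Type*) [Order.Frame X] (g : G → X),
        (∀ a b, g (a ⊓ b) = g a ⊓ g b) → g ⊤ = ⊤ →
        (∀ n : N, g (f n) = ⊤) →
        ∃! g' : Set.Iic (f ⊥) → X,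
          (∀ a b : Set.Iic (f ⊥), g' (a ⊓ b) = g' a ⊓ g' b) ∧ g' ⊤ = ⊤ ∧
            ∀ x : G, g' ⟨x ⊓ f ⊥, inf_le_right⟩ = g x) := by
  have key : ∀ n : N, f n ⊓ f ⊥ = f ⊥ := by
    intro n
    rw [← hf_inf, inf_bot_eq]
  constructor
  · intro n
    ext
    simp [key n]
  · intro X _ g hg_inf hg_top hg_f
    refine ⟨fun y => g y.val, ⟨fun a b => hg_inf a.val b.val, hg_f ⊥, fun x => ?_⟩, ?_⟩
    · have : g (x ⊓ f ⊥) = g x ⊓ g (f ⊥) := hg_inf x (f ⊥)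
      show g (x ⊓ f ⊥) = g x
      rw [this, hg_f ⊥, inf_top_eq]
    · intro g'' ⟨h1, h2, h3⟩
      funext y
      have hy : y.val ⊓ f ⊥ = y.val := inf_eq_left.mpr y.property
      have := h3 y.val
      rw [show (⟨y.val ⊓ f ⊥, inf_le_right⟩ : Set.Iic (f ⊥)) = y from Subtype.ext hy] at this
      exact this
end

section
/- Let G be a frame, u ∈ G, and e : G → ↓u the normal epimorphism e(x) = x ∧ u. Then the inclusion k : ↑u → G of the upset ↑u = {x ∈ G : x ≥ u} is the kernel of e in Frm∧: e ∘ k is constant-top, and any finite-meet preserving map f : X → G with e ∘ f constant-top factors uniquely through k. -/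
/-- Let `G` be a frame, `u ∈ G`, and `e : G → ↓u` the normal epimorphism
`e x = x ⊓ u`. The inclusion `k : ↑u → G` is the kernel of `e` in `Frm∧`:
`e ∘ k` is constant-top, and any finite-meet preserving `f : X → G` with
`e ∘ f` constant-top factors uniquely through `k`. -/
theorem kernel_in_Frm_inf
    {G : Type*} [Order.Frame G] (u : G) :
    (∀ x : Set.Ici u, (⟨(x : G) ⊓ u, inf_le_right⟩ : Set.Iic u) = ⊤) ∧
      (∀ (X : Type*) [Order.Frame X] (f : X → G),
        (∀ a b, f (a ⊓ b) = f a ⊓ f b) → f ⊤ = ⊤ →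
        (∀ x : X, (⟨f x ⊓ u, inf_le_right⟩ : Set.Iic u) = ⊤) →
        ∃! f' : X → Set.Ici u, ∀ x : X, (f' x : G) = f x) := by
  constructor
  · intro x
    ext
    simpa [Set.Iic.coe_top] using inf_eq_right.mpr x.2
  · intro X _ f _ _ hker
    have hu : ∀ x : X, u ≤ f x := by
      intro x
      have := congrArg Subtype.val (hker x)
      simp only [Set.Iic.coe_top] at this
      have h2 : f x ⊓ u = u := this
      exact inf_eq_right.mp h2
    refine ⟨fun x => ⟨f x, hu x⟩, fun x => rfl, ?_⟩
    intro g hg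
    funext x
    exact Subtype.ext (hg x)
end

section
/- A split extension N →k G →e H with splitting s in Frm∧ (where k is the kernel of e, e the cokernel of k, and e ∘ s = id) is weakly Schreier (every g ∈ G equals k(n) ∧ s(h) for some n ∈ N, h ∈ H) if and only if s is right adjoint to e. -/
/-!
If `g = k n ⊓ s h` then `e g = h`, so `g ≤ s (e g)`, which together with `e ∘ s = id` makes `s`
right adjoint to `e`. Conversely, let `s` be right adjoint to `e` and put `u = k ⊥`, the least
element of the image of `k`. Testing the kernel and cokernel properties against the two-element
frame shows that `u ⊔ g` lies in the image of `k` (as `e (u ⊔ g) = ⊤`), and that `u ⊓ x ≤ g`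
whenever `e x = e g`, in particular for `x = s (e g)`. Distributivity and `g ≤ s (e g)` then give
`g = (u ⊔ g) ⊓ s (e g)`.
-/

universe u v

def IsWeaklySchreier {N G H : Type*} [Min G] (k : N → G) (s : H → G) : Prop :=
  ∀ g : G, ∃ (n : N) (h : H), g = k n ⊓ s h

section SplitExtension

variable {N G H : Type*}

theorem galoisConnection_of_isWeaklySchreier [SemilatticeInf G] [SemilatticeInf H] [OrderTop H]
    {k : N → G} {e : G → H} {s : H → G} (he_inf : ∀ a b, e (a ⊓ b) = e a ⊓ e b)
    (hs : Monotone s) (hek : ∀ n, e (k n) = ⊤) (hsec : ∀ h, e (s h) = h)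
    (hws : IsWeaklySchreier k s) : GaloisConnection e s := by
  intro g h
  obtain ⟨n, h', rfl⟩ := hws g
  have he : e (k n ⊓ s h') = h' := by rw [he_inf, hek, hsec, top_inf_eq]
  refine ⟨fun hle => inf_le_right.trans (hs (he ▸ hle)), fun hle => ?_⟩
  simpa only [hsec] using Monotone.of_map_inf he_inf hle

theorem exists_eq_of_map_eq_top [SemilatticeInf G] [OrderTop G] [PartialOrder H] [OrderTop H]
    {k : N → G} {e : G → H} (he : Monotone e)
    (hker : ∀ (X : Type u) [Order.Frame X] (f : X → G),
      (∀ a b, f (a ⊓ b) = f a ⊓ f b) → f ⊤ = ⊤ → (∀ x, e (f x) = ⊤) →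
        ∃ f' : X → N, ∀ x, k (f' x) = f x)
    {g : G} (hg : e g = ⊤) : ∃ n, k n = g := by
  classical
  -- `Set PUnit.{u + 1}` is the two-element frame, in the universe that `hker` quantifies over.
  let f : Set PUnit.{u + 1} → G := fun S => if PUnit.unit ∈ S then ⊤ else g
  have hf_inf : ∀ S T, f (S ⊓ T) = f S ⊓ f T := by
    intro S T
    by_cases hS : PUnit.unit ∈ S <;> by_cases hT : PUnit.unit ∈ T <;>
      simp [f, Set.inf_eq_inter, hS, hT]
  have he_top : e ⊤ = ⊤ := top_unique (hg ▸ he le_top)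
  have hef : ∀ S, e (f S) = ⊤ := fun S => by
    by_cases hS : PUnit.unit ∈ S <;> simp [f, hS, he_top, hg]
  obtain ⟨f', hf'⟩ := hker _ f hf_inf (by simp [f]) hef
  exact ⟨f' ∅, by simpa [f] using hf' ∅⟩

theorem le_iff_le_of_map_eq [SemilatticeInf G] [OrderTop G] {k : N → G} {e : G → H}
    (hcoker : ∀ (X : Type u) [Order.Frame X] (g : G → X),
      (∀ a b, g (a ⊓ b) = g a ⊓ g b) → g ⊤ = ⊤ → (∀ n, g (k n) = ⊤) →
        ∃ g' : H → X, ∀ x, g' (e x) = g x)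
    {c : G} (hc : ∀ n, c ≤ k n) {x y : G} (hxy : e x = e y) : c ≤ x ↔ c ≤ y := by
  let χ : G → Set PUnit.{u + 1} := fun x => {_p | c ≤ x}
  obtain ⟨χ', hχ'⟩ := hcoker _ χ
    (fun a b => by ext; simp [χ, Set.inf_eq_inter])
    (by ext; simp [χ]) (fun n => by ext; simp [χ, hc n])
  have hχ : χ x = χ y := by rw [← hχ', hxy, hχ']
  exact Set.ext_iff.1 hχ PUnit.unit

theorem isWeaklySchreier_of_galoisConnection [Order.Frame N] [Order.Frame G] [PartialOrder H]
    [OrderTop H] {k : N → G} {e : G → H} {s : H → G} (hk : Monotone k) (he : Monotone e)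
    (hek : ∀ n, e (k n) = ⊤)
    (hker : ∀ (X : Type u) [Order.Frame X] (f : X → G),
      (∀ a b, f (a ⊓ b) = f a ⊓ f b) → f ⊤ = ⊤ → (∀ x, e (f x) = ⊤) →
        ∃ f' : X → N, ∀ x, k (f' x) = f x)
    (hcoker : ∀ (X : Type v) [Order.Frame X] (g : G → X),
      (∀ a b, g (a ⊓ b) = g a ⊓ g b) → g ⊤ = ⊤ → (∀ n, g (k n) = ⊤) →
        ∃ g' : H → X, ∀ x, g' (e x) = g x)
    (hsec : ∀ h, e (s h) = h) (hgc : GaloisConnection e s) : IsWeaklySchreier k s := by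
  intro g
  have hg : g ≤ s (e g) := hgc.le_u_l g
  obtain ⟨n, hn⟩ : ∃ n, k n = k ⊥ ⊔ g :=
    exists_eq_of_map_eq_top he hker (top_unique ((hek ⊥).ge.trans (he le_sup_left)))
  have hbelow : k ⊥ ⊓ s (e g) ≤ g :=
    (le_iff_le_of_map_eq hcoker (fun n => inf_le_left.trans (hk bot_le)) (hsec (e g))).1
      inf_le_right
  refine ⟨n, e g, ?_⟩
  rw [hn, inf_sup_right, inf_eq_left.2 hg, sup_eq_right.2 hbelow]

end SplitExtension

theorem weakly_schreier_iff_adjoint_general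
    {N G H : Type*} [Order.Frame N] [Order.Frame G] [Order.Frame H]
    (k : N → G) (e : G → H) (s : H → G)
    (hk_inf : ∀ a b, k (a ⊓ b) = k a ⊓ k b)
    (he_inf : ∀ a b, e (a ⊓ b) = e a ⊓ e b)
    (hs_inf : ∀ a b, s (a ⊓ b) = s a ⊓ s b)
    (hek : ∀ n : N, e (k n) = ⊤)
    (hker : ∀ (X : Type*) [Order.Frame X] (f : X → G),
      (∀ a b, f (a ⊓ b) = f a ⊓ f b) → f ⊤ = ⊤ → (∀ x : X, e (f x) = ⊤) →
      ∃! f' : X → N, ∀ x : X, k (f' x) = f x)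
    (hcoker : ∀ (X : Type*) [Order.Frame X] (g : G → X),
      (∀ a b, g (a ⊓ b) = g a ⊓ g b) → g ⊤ = ⊤ → (∀ n : N, g (k n) = ⊤) →
      ∃! g' : H → X,
        (∀ a b : H, g' (a ⊓ b) = g' a ⊓ g' b) ∧ g' ⊤ = ⊤ ∧
          ∀ x : G, g' (e x) = g x)
    (hsec : ∀ h : H, e (s h) = h) :
    (∀ g : G, ∃ (n : N) (h : H), g = k n ⊓ s h) ↔
      (∀ (g : G) (h : H), e g ≤ h ↔ g ≤ s h) :=
  ⟨galoisConnection_of_isWeaklySchreier he_inf (Monotone.of_map_inf hs_inf) hek hsec,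
    isWeaklySchreier_of_galoisConnection (Monotone.of_map_inf hk_inf) (Monotone.of_map_inf he_inf)
      hek (fun X _ f h₁ h₂ h₃ => (hker X f h₁ h₂ h₃).exists)
      (fun X _ g h₁ h₂ h₃ => (hcoker X g h₁ h₂ h₃).exists.imp fun _ hg' => hg'.2.2) hsec⟩

/-- A split extension `N -k→ G -e→ H` with splitting `s` in `Frm∧` (where `k`
is the kernel of `e`, `e` the cokernel of `k`, and `e ∘ s = id`) is weakly
Schreier (every `g ∈ G` equals `k n ⊓ s h` for some `n`, `h`) if and only if
`s` is right adjoint to `e`. -/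
theorem weakly_schreier_iff_adjoint
    {N G H : Type*} [Order.Frame N] [Order.Frame G] [Order.Frame H]
    (k : N → G) (e : G → H) (s : H → G)
    (hk_inf : ∀ a b, k (a ⊓ b) = k a ⊓ k b) (hk_top : k ⊤ = ⊤)
    (he_inf : ∀ a b, e (a ⊓ b) = e a ⊓ e b) (he_top : e ⊤ = ⊤)
    (hs_inf : ∀ a b, s (a ⊓ b) = s a ⊓ s b) (hs_top : s ⊤ = ⊤)
    (hek : ∀ n : N, e (k n) = ⊤)
    (hker : ∀ (X : Type*) [Order.Frame X] (f : X → G),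
      (∀ a b, f (a ⊓ b) = f a ⊓ f b) → f ⊤ = ⊤ → (∀ x : X, e (f x) = ⊤) →
      ∃! f' : X → N, ∀ x : X, k (f' x) = f x)
    (hcoker : ∀ (X : Type*) [Order.Frame X] (g : G → X),
      (∀ a b, g (a ⊓ b) = g a ⊓ g b) → g ⊤ = ⊤ → (∀ n : N, g (k n) = ⊤) →
      ∃! g' : H → X,
        (∀ a b : H, g' (a ⊓ b) = g' a ⊓ g' b) ∧ g' ⊤ = ⊤ ∧
          ∀ x : G, g' (e x) = g x)
    (hsec : ∀ h : H, e (s h) = h) :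
    (∀ g : G, ∃ (n : N) (h : H), g = k n ⊓ s h) ↔
      (∀ (g : G) (h : H), e g ≤ h ↔ g ≤ s h) :=
  weakly_schreier_iff_adjoint_general k e s hk_inf he_inf hs_inf hek hker hcoker hsec
end

section
/- Let α : H → N be a finite-meet preserving map between frames. Then Gl(α) = {(n,h) ∈ N × H : n ≤ α(h)}, with componentwise finite meets and componentwise arbitrary joins, is a frame (i.e., it is a subframe of N × H closed under finite meets and arbitrary joins, and satisfies the frame distributive law). -/
/-- For a finite-meet preserving `α : H → N`, the set
`Gl(α) = {(n,h) : n ≤ α h} ⊆ N × H` is a frame: it contains the top, is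
closed under (componentwise) finite meets and arbitrary joins, and satisfies
the frame distributive law. -/
theorem glueing_is_frame
    {N H : Type*} [Order.Frame N] [Order.Frame H]
    (α : H → N) (hα_inf : ∀ a b, α (a ⊓ b) = α a ⊓ α b) (hα_top : α ⊤ = ⊤) :
    ((⊤ : N × H) ∈ {p : N × H | p.1 ≤ α p.2}) ∧
      (∀ p q : N × H, p ∈ {p : N × H | p.1 ≤ α p.2} →
        q ∈ {p : N × H | p.1 ≤ α p.2} → p ⊓ q ∈ {p : N × H | p.1 ≤ α p.2}) ∧
      (∀ T : Set (N × H), T ⊆ {p : N × H | p.1 ≤ α p.2} →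
        sSup T ∈ {p : N × H | p.1 ≤ α p.2}) ∧
      (∀ (p : N × H), p ∈ {p : N × H | p.1 ≤ α p.2} →
        ∀ T : Set (N × H), T ⊆ {p : N × H | p.1 ≤ α p.2} →
          p ⊓ sSup T = ⨆ q ∈ T, p ⊓ q) := by
  have hmono : Monotone α := fun a b hab => by
    have : α a = α a ⊓ α b := by rw [← hα_inf, inf_eq_left.mpr hab]
    rw [this]; exact inf_le_right
  refine ⟨?_, ?_, ?_, ?_⟩
  · show (⊤ : N) ≤ α ⊤
    rw [hα_top]
  · intro p q hp hq
    show p.1 ⊓ q.1 ≤ α (p.2 ⊓ q.2)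
    rw [hα_inf]
    exact inf_le_inf hp hq
  · intro T hT
    simp only [Set.mem_setOf_eq, Prod.fst_sSup, Prod.snd_sSup]
    apply sSup_le
    rintro n ⟨p, hp, rfl⟩
    exact (hT hp).trans (hmono (le_sSup ⟨p, hp, rfl⟩))
  · intro p _ T _
    exact inf_sSup_eq
end

section
/- For a finite-meet preserving map α : H → N between frames, the map π₂ : Gl(α) → H, (n,h) ↦ h, is a normal epimorphism in Frm∧, and the map n ↦ (n,1) : N → Gl(α) is its kernel; together with the right adjoint h ↦ (α(h),h) of π₂ this forms an adjoint extension of H by N. -/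
/-- The Artin glueing `Gl(α) = {(n,h) : n ≤ α h}`. -/
def Gl {N H : Type*} [Order.Frame N] [Order.Frame H] (α : H → N) : Type _ :=
  {p : N × H // p.1 ≤ α p.2}

instance {N H : Type*} [Order.Frame N] [Order.Frame H] (α : H → N) :
    PartialOrder (Gl α) :=
  inferInstanceAs (PartialOrder {p : N × H // p.1 ≤ α p.2})

/-- Componentwise binary meet on `Gl(α)`. -/
def Gl.inf {N H : Type*} [Order.Frame N] [Order.Frame H] {α : H → N}
    (hα_inf : ∀ a b, α (a ⊓ b) = α a ⊓ α b) (p q : Gl α) : Gl α :=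
  ⟨p.1 ⊓ q.1, le_trans (inf_le_inf p.2 q.2) (le_of_eq (hα_inf _ _).symm)⟩

/-- The top element of `Gl(α)`. -/
def Gl.top {N H : Type*} [Order.Frame N] [Order.Frame H] {α : H → N}
    (hα_top : α ⊤ = ⊤) : Gl α :=
  ⟨⊤, hα_top.ge⟩

/-- The second projection `π₂ : Gl(α) → H`. -/
def Gl.π₂ {N H : Type*} [Order.Frame N] [Order.Frame H] {α : H → N}
    (p : Gl α) : H :=
  p.1.2

/-- The kernel map `N → Gl(α)`, `n ↦ (n, ⊤)`. -/
def Gl.ker {N H : Type*} [Order.Frame N] [Order.Frame H] {α : H → N}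
    (hα_top : α ⊤ = ⊤) (n : N) : Gl α :=
  ⟨(n, ⊤), le_top.trans hα_top.ge⟩

/-- The splitting `H → Gl(α)`, `h ↦ (α h, h)`. -/
def Gl.spl {N H : Type*} [Order.Frame N] [Order.Frame H] (α : H → N)
    (h : H) : Gl α :=
  ⟨(α h, h), le_rfl⟩

/-- `π₂ : Gl(α) → H` is a normal epimorphism (it is the cokernel of its
kernel `n ↦ (n,⊤)`), the map `n ↦ (n,⊤)` is the kernel of `π₂`, and together
with the right adjoint splitting `h ↦ (α h, h)` this is an adjoint extension
of `H` by `N`. -/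
theorem glueing_is_adjoint_extension
    {N H : Type*} [Order.Frame N] [Order.Frame H]
    (α : H → N) (hα_inf : ∀ a b, α (a ⊓ b) = α a ⊓ α b) (hα_top : α ⊤ = ⊤) :
    -- `π₂ ∘ ker` is the zero morphism
    (∀ n : N, Gl.π₂ (Gl.ker hα_top n) = ⊤) ∧
    -- `ker` is the kernel of `π₂`
      (∀ (X : Type*) [Order.Frame X] (f : X → Gl α),
        (∀ a b : X, f (a ⊓ b) = Gl.inf hα_inf (f a) (f b)) →
        f ⊤ = Gl.top hα_top →
        (∀ x : X, Gl.π₂ (f x) = ⊤) →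
        ∃! f' : X → N, ∀ x : X, Gl.ker hα_top (f' x) = f x) ∧
    -- `π₂` is the cokernel of `ker`, hence a normal epimorphism
      (∀ (X : Type*) [Order.Frame X] (g : Gl α → X),
        (∀ p q : Gl α, g (Gl.inf hα_inf p q) = g p ⊓ g q) →
        g (Gl.top hα_top) = ⊤ →
        (∀ n : N, g (Gl.ker hα_top n) = ⊤) →
        ∃! g' : H → X,
          (∀ a b : H, g' (a ⊓ b) = g' a ⊓ g' b) ∧ g' ⊤ = ⊤ ∧
            ∀ p : Gl α, g' (Gl.π₂ p) = g p) ∧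
    -- the splitting is a section of `π₂`
      (∀ h : H, Gl.π₂ (Gl.spl α h) = h) ∧
    -- and it is right adjoint to `π₂`
      (∀ (p : Gl α) (h : H), Gl.π₂ p ≤ h ↔ p ≤ Gl.spl α h) := by
  have hmono : ∀ a b : H, a ≤ b → α a ≤ α b := by
    intro a b hab
    have : a ⊓ b = a := inf_eq_left.mpr hab
    calc α a = α (a ⊓ b) := by rw [this]
    _ = α a ⊓ α b := hα_inf a b
    _ ≤ α b := inf_le_right
  refine ⟨fun n => rfl, ?_, ?_, fun h => rfl, ?_⟩
  · intro X _ f hfinf hftop hfπ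
    refine ⟨fun x => (f x).1.1, fun x => ?_, ?_⟩
    · apply Subtype.ext
      exact Prod.ext rfl (hfπ x).symm
    · intro f' hf'
      funext x
      have := hf' x
      have : (Gl.ker hα_top (f' x)).1.1 = (f x).1.1 := by rw [this]
      exact this
  · intro X _ g hginf hgtop hgker
    have hsurj : ∀ p : Gl α, g p = g (Gl.spl α p.1.2) ⊓ g (Gl.ker hα_top p.1.1) := by
      intro p
      rw [← hginf]
      congr 1
      apply Subtype.ext
      apply Prod.ext
      · exact (inf_eq_right.mpr p.2).symm
      · exact (inf_top_eq _).symm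
    refine ⟨fun h => g (Gl.spl α h), ⟨?_, ?_, ?_⟩, ?_⟩
    · intro a b
      show g (Gl.spl α (a ⊓ b)) = g (Gl.spl α a) ⊓ g (Gl.spl α b)
      rw [← hginf]
      congr 1
      exact Subtype.ext (Prod.ext (hα_inf a b) rfl)
    · show g (Gl.spl α ⊤) = ⊤
      rw [← hgtop]
      congr 1
      exact Subtype.ext (Prod.ext hα_top rfl)
    · intro p
      rw [hsurj p, hgker, inf_top_eq]
      rfl
    · intro g' ⟨_, _, hg'⟩
      funext h
      exact hg' (Gl.spl α h)
  · intro p h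
    constructor
    · intro hle
      refine ⟨?_, hle⟩
      exact p.2.trans (hmono _ _ hle)
    · intro hle
      exact hle.2
end

section
/- Let G be a frame and u ∈ G, with k : ↑u → G the inclusion, k*(x) = x ∨ u its left adjoint, e(x) = x ∧ u : G → ↓u, and e*(h) = (u ⇒ h) its right adjoint. Then the map f : G → Gl(k* ∘ e*) defined by f(g) = (g ∨ u, g ∧ u) is a frame isomorphism, with inverse f'(n,h) = n ∧ (u ⇒ h); moreover f ∘ k = π₁*, π₂ ∘ f = e, and f ∘ e* = (π₂)*. -/
section
variable {G : Type*} [Order.Frame G] (u : G)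

/-- The Artin glueing of `k* ∘ e* : ↓u → ↑u`, where `k* x = x ⊔ u` and
`e* h = u ⇨ h`: pairs `(n, h) ∈ ↑u × ↓u` with `n ≤ (u ⇨ h) ⊔ u`. -/
def GlKE : Type _ :=
  {p : Set.Ici u × Set.Iic u // (p.1 : G) ≤ (u ⇨ (p.2 : G)) ⊔ u}

instance : PartialOrder (GlKE u) :=
  inferInstanceAs (PartialOrder {p : Set.Ici u × Set.Iic u // (p.1 : G) ≤ (u ⇨ (p.2 : G)) ⊔ u})

/-- The comparison map `f : G → Gl(k* ∘ e*)`, `g ↦ (g ⊔ u, g ⊓ u)`. -/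
def glKEmap (g : G) : GlKE u :=
  ⟨(⟨g ⊔ u, le_sup_right⟩, ⟨g ⊓ u, inf_le_right⟩),
    sup_le_sup_right (le_himp_iff.mpr le_rfl) u⟩

/-- Its inverse `f' : Gl(k* ∘ e*) → G`, `(n,h) ↦ n ⊓ (u ⇨ h)`. -/
def glKEinv (p : GlKE u) : G :=
  (p.1.1 : G) ⊓ (u ⇨ (p.1.2 : G))

/-- The kernel `π₁* : ↑u → Gl(k* ∘ e*)`, `n ↦ (n, u)`. -/
def glKEker (n : Set.Ici u) : GlKE u :=
  ⟨(n, ⟨u, le_rfl⟩), by simp⟩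

/-- The splitting `(π₂)* : ↓u → Gl(k* ∘ e*)`, `h ↦ ((u ⇨ h) ⊔ u, h)`. -/
def glKEspl (h : Set.Iic u) : GlKE u :=
  ⟨(⟨(u ⇨ (h : G)) ⊔ u, le_sup_right⟩, h), le_rfl⟩

end

private lemma glKE_aux1 {G : Type*} [Order.Frame G] (u g : G) :
    (g ⊔ u) ⊓ (u ⇨ (g ⊓ u)) = g := by
  rw [himp_inf_distrib, himp_self, inf_top_eq, inf_sup_right,
    inf_eq_left.mpr le_himp, inf_himp]
  simp [inf_comm]

private lemma glKE_aux2 {G : Type*} [Order.Frame G] (u n h : G) (hn : u ≤ n)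
    (hc : n ≤ (u ⇨ h) ⊔ u) : (n ⊓ (u ⇨ h)) ⊔ u = n := by
  rw [sup_inf_right, sup_eq_left.mpr hn]
  exact inf_eq_left.mpr hc

private lemma glKE_aux3 {G : Type*} [Order.Frame G] (u n h : G) (hn : u ≤ n)
    (hh : h ≤ u) : (n ⊓ (u ⇨ h)) ⊓ u = h := by
  rw [inf_assoc, himp_inf_self, inf_eq_left.mpr hh, inf_eq_right.mpr (hh.trans hn)]

private lemma glKE_ext {G : Type*} [Order.Frame G] {u : G} {p q : GlKE u}
    (h1 : (p.1.1 : G) = q.1.1) (h2 : (p.1.2 : G) = q.1.2) : p = q :=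
  Subtype.ext (Prod.ext (Subtype.ext h1) (Subtype.ext h2))

private lemma glKEinv_mono {G : Type*} [Order.Frame G] {u : G} {p q : GlKE u}
    (h : p ≤ q) : glKEinv u p ≤ glKEinv u q :=
  inf_le_inf h.1 (himp_le_himp_left h.2)

/-- Every adjoint extension is isomorphic, as an adjoint extension, to the
Artin glueing of `k* ∘ e*`: the map `f g = (g ⊔ u, g ⊓ u)` is a frame
isomorphism (an order isomorphism with inverse `(n,h) ↦ n ⊓ (u ⇨ h)`) which
commutes with the kernels, the cokernels and the splittings. -/
theorem adjoint_extension_iso_glueing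
    {G : Type*} [Order.Frame G] (u : G) :
    -- `f'` is a two-sided inverse of `f`
    (∀ g : G, glKEinv u (glKEmap u g) = g) ∧
      (∀ p : GlKE u, glKEmap u (glKEinv u p) = p) ∧
    -- `f` is an order isomorphism, hence a frame isomorphism
      (∀ a b : G, a ≤ b ↔ glKEmap u a ≤ glKEmap u b) ∧
    -- `f ∘ k = π₁*`
      (∀ n : Set.Ici u, glKEmap u (n : G) = glKEker u n) ∧
    -- `π₂ ∘ f = e`
      (∀ g : G, (glKEmap u g).1.2 = (⟨g ⊓ u, inf_le_right⟩ : Set.Iic u)) ∧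
    -- `f ∘ e* = (π₂)*`
      (∀ h : Set.Iic u, glKEmap u (u ⇨ (h : G)) = glKEspl u h) := by
  have hinv : ∀ g : G, glKEinv u (glKEmap u g) = g := fun g => glKE_aux1 u g
  refine ⟨hinv, ?_, ?_, ?_, fun g => rfl, ?_⟩
  · intro p
    exact glKE_ext (glKE_aux2 u _ _ p.1.1.2 p.2) (glKE_aux3 u _ _ p.1.1.2 p.1.2.2)
  · intro a b
    constructor
    · intro h
      exact ⟨sup_le_sup_right h u, inf_le_inf_right u h⟩
    · intro h
      have := glKEinv_mono h
      rwa [hinv, hinv] at this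
  · intro n
    exact glKE_ext (sup_eq_left.mpr n.2) (inf_eq_right.mpr n.2)
  · intro h
    refine glKE_ext rfl ?_
    show (u ⇨ (h : G)) ⊓ u = h
    rw [inf_comm, inf_himp, inf_eq_right.mpr h.2]
end

section
/- Let α : H → N and f : H' → H be finite-meet preserving maps between frames. The pullback in the category of meet-semilattices of π₂ : Gl(α) → H along f is isomorphic to Gl(α ∘ f) with projections (n,h') ↦ (n, f(h')) and (n,h') ↦ h'; in particular the pullback of a normal epimorphism in Frm∧ along any morphism exists and is a normal epimorphism. -/
section
variable {N H H' : Type*} [Order.Frame N] [Order.Frame H] [Order.Frame H']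

/-- The pullback, in meet-semilattices, of `π₂ : Gl(α) → H` along `f`:
pairs `((n,h),h')` with `(n,h) ∈ Gl(α)` and `h = f h'`. -/
def GlPullback (α : H → N) (f : H' → H) : Type _ :=
  {q : (N × H) × H' // q.1.1 ≤ α q.1.2 ∧ q.1.2 = f q.2}

instance (α : H → N) (f : H' → H) : PartialOrder (GlPullback α f) :=
  inferInstanceAs (PartialOrder {q : (N × H) × H' // q.1.1 ≤ α q.1.2 ∧ q.1.2 = f q.2})

/-- The glueing `Gl(α ∘ f)` as pairs in `N × H'`. -/
def GlComp (α : H → N) (f : H' → H) : Type _ :=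
  {p : N × H' // p.1 ≤ α (f p.2)}

instance (α : H → N) (f : H' → H) : PartialOrder (GlComp α f) :=
  inferInstanceAs (PartialOrder {p : N × H' // p.1 ≤ α (f p.2)})

/-- The comparison map `Gl(α ∘ f) → Gl(α) ×_H H'`, `(n,h') ↦ ((n, f h'), h')`. -/
def glCompare (α : H → N) (f : H' → H) (p : GlComp α f) : GlPullback α f :=
  ⟨((p.1.1, f p.1.2), p.1.2), ⟨p.2, rfl⟩⟩

end

/-- The pullback in meet-semilattices of `π₂ : Gl(α) → H` along `f : H' → H`
is (order-)isomorphic to `Gl(α ∘ f)`, compatibly with the projections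
`(n,h') ↦ (n, f h')` to `Gl(α)` and `(n,h') ↦ h'` to `H'`; moreover
`Gl(α ∘ f)` with these projections satisfies the pullback universal property,
so the pullback of the normal epimorphism `π₂` along any morphism exists and
is again (the `π₂` of a glueing, hence) a normal epimorphism. -/
theorem glueing_pullback
    {N H H' : Type*} [Order.Frame N] [Order.Frame H] [Order.Frame H']
    (α : H → N) (hα_inf : ∀ a b, α (a ⊓ b) = α a ⊓ α b) (hα_top : α ⊤ = ⊤)
    (f : H' → H) (hf_inf : ∀ a b, f (a ⊓ b) = f a ⊓ f b) (hf_top : f ⊤ = ⊤) :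
    -- the comparison map is an order isomorphism onto the pullback
    (Function.Bijective (glCompare α f)) ∧
      (∀ p q : GlComp α f, p ≤ q ↔ glCompare α f p ≤ glCompare α f q) ∧
    -- it commutes with the projections
      (∀ p : GlComp α f, ((glCompare α f p).1.1 : N × H) = (p.1.1, f p.1.2)) ∧
      (∀ p : GlComp α f, (glCompare α f p).1.2 = p.1.2) ∧
    -- `Gl(α ∘ f)` satisfies the universal property of the pullback of
    -- `π₂ : Gl(α) → H` along `f` among meet-semilattices
      (∀ (X : Type*) [SemilatticeInf X] [OrderTop X]
        (a : X → N × H) (b : X → H'),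
        (∀ x, (a x).1 ≤ α (a x).2) →
        (∀ x y, a (x ⊓ y) = a x ⊓ a y) → a ⊤ = ⊤ →
        (∀ x y, b (x ⊓ y) = b x ⊓ b y) → b ⊤ = ⊤ →
        (∀ x, (a x).2 = f (b x)) →
        ∃! c : X → GlComp α f,
          (∀ x, ((c x).1.1, f (c x).1.2) = a x) ∧ (∀ x, (c x).1.2 = b x)) := by
  have fmono : ∀ {x y : H'}, x ≤ y → f x ≤ f y := by
    intro x y hxy
    calc f x = f (x ⊓ y) := by rw [inf_eq_left.mpr hxy]
    _ = f x ⊓ f y := hf_inf x y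
    _ ≤ f y := inf_le_right
  refine ⟨⟨?_, ?_⟩, ?_, fun p => rfl, fun p => rfl, ?_⟩
  · rintro ⟨⟨n, h'⟩, hp⟩ ⟨⟨m, h''⟩, hq⟩ h
    have := congrArg Subtype.val h
    simp only [glCompare, Prod.mk.injEq] at this
    apply Subtype.ext
    exact Prod.ext this.1.1 this.2
  · rintro ⟨⟨⟨n, h⟩, h'⟩, h1, h2⟩
    refine ⟨⟨(n, h'), h2 ▸ h1⟩, ?_⟩
    apply Subtype.ext
    simp only [glCompare]
    exact Prod.ext (Prod.ext rfl h2.symm) rfl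
  · rintro ⟨⟨n, h'⟩, hp⟩ ⟨⟨m, h''⟩, hq⟩
    constructor
    · rintro ⟨h1, h2⟩
      exact ⟨⟨h1, fmono h2⟩, h2⟩
    · rintro ⟨⟨h1, _⟩, h2⟩
      exact ⟨h1, h2⟩
  · intro X _ _ a b ha hainf hatop hbinf hbtop hab
    refine ⟨fun x => ⟨((a x).1, b x), by rw [← hab]; exact ha x⟩, ⟨?_, fun x => rfl⟩, ?_⟩
    · intro x
      exact Prod.ext rfl (hab x).symm
    · rintro c ⟨hc1, hc2⟩
      funext x
      apply Subtype.ext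
      refine Prod.ext ?_ (hc2 x)
      exact (Prod.ext_iff.mp (hc1 x)).1
end

section
/- Let α : H → N be a finite-meet preserving map between frames and let u = (0,1) ∈ Gl(α). Then ↓u ⊆ Gl(α) is isomorphic as a frame to H via h ↦ (0,h), ↑u ⊆ Gl(α) is isomorphic as a frame to N via n ↦ (n,1), and under the first isomorphism the map (n,h) ↦ (n,h) ∧ (0,1) corresponds to π₂. -/
section
variable {N H : Type*} [Order.Frame N] [Order.Frame H]

/-- The principal downset `↓(0,1)` of `u = (⊥,⊤)` inside the glueing `Gl(α)`:
elements of `Gl(α)` below `(⊥,⊤)`. -/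
def GlDown (α : H → N) : Type _ :=
  {p : N × H // p.1 ≤ α p.2 ∧ p ≤ ((⊥ : N), (⊤ : H))}

instance (α : H → N) : PartialOrder (GlDown α) :=
  inferInstanceAs (PartialOrder {p : N × H // p.1 ≤ α p.2 ∧ p ≤ ((⊥ : N), (⊤ : H))})

/-- The principal upset `↑(0,1)` of `u = (⊥,⊤)` inside the glueing `Gl(α)`. -/
def GlUp (α : H → N) : Type _ :=
  {p : N × H // p.1 ≤ α p.2 ∧ ((⊥ : N), (⊤ : H)) ≤ p}

instance (α : H → N) : PartialOrder (GlUp α) :=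
  inferInstanceAs (PartialOrder {p : N × H // p.1 ≤ α p.2 ∧ ((⊥ : N), (⊤ : H)) ≤ p})

/-- The map `h ↦ (⊥, h) : H → ↓(0,1)`. -/
def glDownMap (α : H → N) (h : H) : GlDown α :=
  ⟨((⊥ : N), h), bot_le, le_refl ⊥, le_top⟩

/-- The map `n ↦ (n, ⊤) : N → ↑(0,1)`. -/
def glUpMap {α : H → N} (hα_top : α ⊤ = ⊤) (n : N) : GlUp α :=
  ⟨(n, (⊤ : H)), le_top.trans hα_top.ge, bot_le, le_refl ⊤⟩

end

/-!
Every element of `↓(⊥,⊤)` has first coordinate `⊥` and every element of `↑(⊥,⊤)` has second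
coordinate `⊤`, so the two principal sets are order-isomorphic to `H` and `N` respectively;
an order isomorphism between frames preserves all meets and joins, hence is a frame isomorphism.
-/

section
variable {N H : Type*} [Order.Frame N] [Order.Frame H]

theorem GlDown.fst_eq_bot {α : H → N} (p : GlDown α) : p.1.1 = ⊥ :=
  le_bot_iff.mp p.2.2.1

theorem GlUp.snd_eq_top {α : H → N} (p : GlUp α) : p.1.2 = ⊤ :=
  top_le_iff.mp p.2.2.2

def glDownOrderIso (α : H → N) : H ≃o GlDown α where
  toFun := glDownMap α
  invFun p := p.1.2
  left_inv _ := rfl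
  right_inv p := Subtype.ext (Prod.ext p.fst_eq_bot.symm rfl)
  map_rel_iff' := ⟨And.right, fun h => ⟨le_rfl, h⟩⟩

theorem coe_glDownOrderIso (α : H → N) : ⇑(glDownOrderIso α) = glDownMap α := rfl

def glUpOrderIso {α : H → N} (hα_top : α ⊤ = ⊤) : N ≃o GlUp α where
  toFun := glUpMap hα_top
  invFun p := p.1.1
  left_inv _ := rfl
  right_inv p := Subtype.ext (Prod.ext rfl p.snd_eq_top.symm)
  map_rel_iff' := ⟨And.left, fun h => ⟨h, le_rfl⟩⟩

theorem coe_glUpOrderIso {α : H → N} (hα_top : α ⊤ = ⊤) :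
    ⇑(glUpOrderIso hα_top) = glUpMap hα_top := rfl

theorem glDownMap_snd_val_eq_inf (α : H → N) (p : N × H) :
    (glDownMap α p.2).1 = p ⊓ ((⊥ : N), (⊤ : H)) :=
  Prod.ext (inf_bot_eq p.1).symm (inf_top_eq p.2).symm

end

theorem glueing_down_up_iso_general
    {N H : Type*} [Order.Frame N] [Order.Frame H]
    (α : H → N) (hα_top : α ⊤ = ⊤) :
    -- `h ↦ (0,h)` is a frame isomorphism `H ≅ ↓(0,1)`
    (Function.Bijective (glDownMap α)) ∧
      (∀ h h' : H, h ≤ h' ↔ glDownMap α h ≤ glDownMap α h') ∧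
    -- `n ↦ (n,1)` is a frame isomorphism `N ≅ ↑(0,1)`
      (Function.Bijective (glUpMap (α := α) hα_top)) ∧
      (∀ n n' : N, n ≤ n' ↔ glUpMap (α := α) hα_top n ≤ glUpMap (α := α) hα_top n') ∧
    -- under `h ↦ (0,h)`, the map `p ↦ p ⊓ (0,1)` corresponds to `π₂`
      (∀ p : N × H, p.1 ≤ α p.2 →
        (glDownMap α p.2).1 = p ⊓ ((⊥ : N), (⊤ : H))) := by
  rw [← coe_glDownOrderIso, ← coe_glUpOrderIso]
  exact ⟨(glDownOrderIso α).bijective, fun _ _ => (glDownOrderIso α).le_iff_le.symm,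
    (glUpOrderIso hα_top).bijective, fun _ _ => (glUpOrderIso hα_top).le_iff_le.symm,
    fun p _ => glDownMap_snd_val_eq_inf α p⟩

/-- For the Artin glueing `Gl(α)` and `u = (0,1) ∈ Gl(α)`: `↓u ≅ H` via
`h ↦ (0,h)`, `↑u ≅ N` via `n ↦ (n,1)` (both order isomorphisms, hence frame
isomorphisms), and under the first isomorphism the normal epimorphism
`p ↦ p ⊓ u` corresponds to `π₂`. -/
theorem glueing_down_up_iso
    {N H : Type*} [Order.Frame N] [Order.Frame H]
    (α : H → N) (hα_inf : ∀ a b, α (a ⊓ b) = α a ⊓ α b) (hα_top : α ⊤ = ⊤) :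
    -- `h ↦ (0,h)` is a frame isomorphism `H ≅ ↓(0,1)`
    (Function.Bijective (glDownMap α)) ∧
      (∀ h h' : H, h ≤ h' ↔ glDownMap α h ≤ glDownMap α h') ∧
    -- `n ↦ (n,1)` is a frame isomorphism `N ≅ ↑(0,1)`
      (Function.Bijective (glUpMap (α := α) hα_top)) ∧
      (∀ n n' : N, n ≤ n' ↔ glUpMap (α := α) hα_top n ≤ glUpMap (α := α) hα_top n') ∧
    -- under `h ↦ (0,h)`, the map `p ↦ p ⊓ (0,1)` corresponds to `π₂`
      (∀ p : N × H, p.1 ≤ α p.2 →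
        (glDownMap α p.2).1 = p ⊓ ((⊥ : N), (⊤ : H))) :=
  glueing_down_up_iso_general α hα_top
end
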